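/- arXiv:1911.13137 — 3 statements merged into one kernel-verified Lean document; each statement's English description precedes it below -/
import Mathlib

section
/- The 2×2 Hermitian matrix with diagonal entries (1 ± s(|p₁|²-|p₂|²))/2 and off-diagonal entries λ p₁ p̄₂ and λ p̄₁ p₂ is positive semidefinite for all unit vectors (p₁,p₂) ∈ ℂ² if and only if the real parameters satisfy |s| ≤ 1 and |λ| ≤ 1. -/
/-!
A Hermitian `2 × 2` matrix is positive semidefinite exactly when its trace and determinant,
the sum and product of its two real eigenvalues, are nonnegative. Here the trace is `1`, and
with `x = |p₁|² - |p₂|² ∈ [-1, 1]` one has `4 |p₁|² |p₂|² = 1 - x²`, so the determinant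
condition reads `λ² (1 - x²) ≤ 1 - s² x²`. Taking `x = 1` forces `s² ≤ 1` and `x = 0` forces
`λ² ≤ 1`; conversely these give `λ² (1 - x²) ≤ 1 - x² ≤ 1 - s² x²`.
-/

open Matrix ComplexOrder

namespace Matrix

variable {𝕜 : Type*} [RCLike 𝕜]

theorem posSemidef_iff_of_fin_two {A : Matrix (Fin 2) (Fin 2) 𝕜} :
    A.PosSemidef ↔ A.IsHermitian ∧ 0 ≤ A.trace ∧ 0 ≤ A.det := by
  refine ⟨fun hA ↦ ⟨hA.isHermitian, hA.trace_nonneg, hA.det_nonneg⟩, ?_⟩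
  rintro ⟨hA, htr, hdet⟩
  rw [hA.posSemidef_iff_eigenvalues_nonneg]
  rw [hA.trace_eq_sum_eigenvalues, Fin.sum_univ_two, ← RCLike.ofReal_add,
    RCLike.ofReal_nonneg] at htr
  rw [hA.det_eq_prod_eigenvalues, Fin.prod_univ_two, ← RCLike.ofReal_mul,
    RCLike.ofReal_nonneg] at hdet
  intro i
  fin_cases i <;> simp <;> nlinarith

theorem posSemidef_of_ofReal_diag_iff (a c : ℝ) (b : 𝕜) :
    (of ![![(a : 𝕜), b], ![star b, (c : 𝕜)]]).PosSemidef ↔ 0 ≤ a + c ∧ ‖b‖ ^ 2 ≤ a * c := by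
  have hherm : (of ![![(a : 𝕜), b], ![star b, (c : 𝕜)]]).IsHermitian := by
    ext i j
    fin_cases i <;> fin_cases j <;> simp
  rw [posSemidef_iff_of_fin_two, trace_fin_two, det_fin_two]
  simp only [hherm, true_and, of_apply, cons_val', cons_val_zero, cons_val_one, empty_val',
    cons_val_fin_one]
  rw [RCLike.star_def, RCLike.mul_conj, ← RCLike.ofReal_add, ← RCLike.ofReal_mul,
    ← RCLike.ofReal_pow, ← RCLike.ofReal_sub, RCLike.ofReal_nonneg, RCLike.ofReal_nonneg,
    sub_nonneg]

end Matrix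

theorem forall_unit_mul_le_iff (s l : ℝ) :
    (∀ A B : ℝ, 0 ≤ A → 0 ≤ B → A + B = 1 →
      l ^ 2 * A * B ≤ (1 + s * (A - B)) / 2 * ((1 + s * (B - A)) / 2)) ↔
      |s| ≤ 1 ∧ |l| ≤ 1 := by
  rw [← sq_le_one_iff_abs_le_one, ← sq_le_one_iff_abs_le_one]
  constructor
  · intro h
    have hs := h 1 0 zero_le_one le_rfl (add_zero 1)
    have hl := h (1 / 2) (1 / 2) (by norm_num) (by norm_num) (by norm_num)
    constructor <;> nlinarith
  · rintro ⟨hs, hl⟩ A B hA hB hAB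
    nlinarith [mul_nonneg hA hB, mul_nonneg (sub_nonneg.2 hl) (mul_nonneg hA hB),
      mul_nonneg (sub_nonneg.2 hs) (sq_nonneg (A - B))]

theorem posSemidef_iff_sq_mul_le (s l : ℝ) (p₁ p₂ : ℂ) :
    (of ![![(((1 + s * (‖p₁‖ ^ 2 - ‖p₂‖ ^ 2)) / 2 : ℝ) : ℂ), (l : ℂ) * p₁ * star p₂],
        ![(l : ℂ) * star p₁ * p₂, (((1 + s * (‖p₂‖ ^ 2 - ‖p₁‖ ^ 2)) / 2 : ℝ) : ℂ)]]).PosSemidef ↔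
      l ^ 2 * ‖p₁‖ ^ 2 * ‖p₂‖ ^ 2 ≤
        (1 + s * (‖p₁‖ ^ 2 - ‖p₂‖ ^ 2)) / 2 * ((1 + s * (‖p₂‖ ^ 2 - ‖p₁‖ ^ 2)) / 2) := by
  have hstar : (l : ℂ) * star p₁ * p₂ = star ((l : ℂ) * p₁ * star p₂) := by
    rw [star_mul', star_mul', star_star, Complex.star_def, Complex.conj_ofReal]
  rw [hstar]
  set a := (1 + s * (‖p₁‖ ^ 2 - ‖p₂‖ ^ 2)) / 2
  set c := (1 + s * (‖p₂‖ ^ 2 - ‖p₁‖ ^ 2)) / 2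
  have htrace : a + c = 1 := by ring
  refine (posSemidef_of_ofReal_diag_iff (𝕜 := ℂ) a c _).trans ?_
  simp only [norm_mul, norm_star, Complex.norm_real, Real.norm_eq_abs, mul_pow, sq_abs, htrace]
  exact and_iff_right zero_le_one

theorem stmt_6 (s l : ℝ) :
    (∀ p₁ p₂ : ℂ, ‖p₁‖ ^ 2 + ‖p₂‖ ^ 2 = 1 →
        (Matrix.of
          ![![(((1 + s * (‖p₁‖ ^ 2 - ‖p₂‖ ^ 2)) / 2 : ℝ) : ℂ),
              (l : ℂ) * p₁ * star p₂],
            ![(l : ℂ) * star p₁ * p₂,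
              (((1 + s * (‖p₂‖ ^ 2 - ‖p₁‖ ^ 2)) / 2 : ℝ) : ℂ)]]).PosSemidef) ↔
      |s| ≤ 1 ∧ |l| ≤ 1 := by
  simp_rw [posSemidef_iff_sq_mul_le, ← forall_unit_mul_le_iff]
  constructor
  · intro h A B hA hB hAB
    have hsqrt := h √A √B
    simp only [Complex.norm_real, Real.norm_eq_abs, sq_abs, Real.sq_sqrt hA,
      Real.sq_sqrt hB] at hsqrt
    exact hsqrt hAB
  · exact fun h p₁ p₂ ↦ h _ _ (sq_nonneg _) (sq_nonneg _)
end

section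
/- A linear map Φ : M(d,ℂ) → M(d,ℂ) is completely positive if and only if its Choi matrix J(Φ) = Σ_{ij} E_{ij} ⊗ Φ(E_{ij}) is positive semidefinite. -/
/-!
Forward direction: the Choi matrix is the image under `id ⊗ Φ` of the rank-one positive matrix
`ω ω*`, where `ω = ∑ᵢ eᵢ ⊗ eᵢ` is the unnormalised maximally entangled vector.
Backward direction: `(id_α ⊗ Φ) M = Vᴴ (M ⊗ J(Φ)) V` for a fixed 0/1 matrix `V` that contracts the
two middle indices of `M ⊗ J(Φ)`, and a compression of a Kronecker product of positive
semidefinite matrices is positive semidefinite.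
-/

open Matrix Kronecker ComplexOrder

namespace Matrix

variable {𝕜 ι κ α : Type*} [RCLike 𝕜]

/-- `(id_α ⊗ Φ) M`, with `M` read as an `α × α` block matrix of `ι × ι` blocks. -/
def ampliation (Φ : Matrix ι ι 𝕜 →ₗ[𝕜] Matrix κ κ 𝕜) (M : Matrix (α × ι) (α × ι) 𝕜) :
    Matrix (α × κ) (α × κ) 𝕜 :=
  of fun p q => Φ (of fun i j => M (p.1, i) (q.1, j)) p.2 q.2

def choiMatrix [DecidableEq ι] (Φ : Matrix ι ι 𝕜 →ₗ[𝕜] Matrix κ κ 𝕜) :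
    Matrix (ι × κ) (ι × κ) 𝕜 :=
  of fun p q => Φ (single p.1 q.1 1) p.2 q.2

def ampliationCompression (𝕜 α ι κ : Type*) [RCLike 𝕜] [DecidableEq α] [DecidableEq ι]
    [DecidableEq κ] : Matrix ((α × ι) × (ι × κ)) (α × κ) 𝕜 :=
  of fun x p => if x.1.1 = p.1 ∧ x.1.2 = x.2.1 ∧ x.2.2 = p.2 then 1 else 0

variable [Fintype ι] [DecidableEq ι] (Φ : Matrix ι ι 𝕜 →ₗ[𝕜] Matrix κ κ 𝕜)

theorem sum_single_kronecker_eq_choiMatrix :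
    ∑ i, ∑ j, single i j (1 : 𝕜) ⊗ₖ Φ (single i j 1) = choiMatrix Φ := by
  ext ⟨i, b⟩ ⟨j, e⟩
  simp [choiMatrix, sum_apply, kroneckerMap_apply, single, ite_and]

theorem ampliation_apply (M : Matrix (α × ι) (α × ι) 𝕜) (p q : α × κ) :
    ampliation Φ M p q = ∑ i, ∑ j, M (p.1, i) (q.1, j) * choiMatrix Φ (i, p.2) (j, q.2) := by
  conv_lhs => rw [ampliation, of_apply, matrix_eq_sum_single (of fun i j => M (p.1, i) (q.1, j))]
  simp only [map_sum, sum_apply]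
  refine Finset.sum_congr rfl fun i _ => Finset.sum_congr rfl fun j _ => ?_
  have : single i j (M (p.1, i) (q.1, j)) = M (p.1, i) (q.1, j) • single i j 1 := by
    rw [smul_single, smul_eq_mul, mul_one]
  rw [of_apply, this, map_smul]
  rfl

theorem choiMatrix_eq_ampliation_vecMulVec :
    choiMatrix Φ = ampliation Φ (vecMulVec (fun x : ι × ι => if x.1 = x.2 then (1 : 𝕜) else 0)
      (star fun x => if x.1 = x.2 then 1 else 0)) := by
  ext ⟨i, b⟩ ⟨j, e⟩
  simp [ampliation_apply, vecMulVec_apply, choiMatrix]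

theorem ampliation_eq_conjTranspose_mul_kronecker_mul [Fintype α] [DecidableEq α] [Fintype κ]
    [DecidableEq κ] (M : Matrix (α × ι) (α × ι) 𝕜) :
    ampliation Φ M = (ampliationCompression 𝕜 α ι κ)ᴴ * (M ⊗ₖ choiMatrix Φ) *
      ampliationCompression 𝕜 α ι κ := by
  ext p q
  rw [ampliation_apply, Finset.sum_comm]
  simp [ampliationCompression, mul_apply, Fintype.sum_prod_type, ite_and,
    apply_ite (starRingEnd 𝕜)]

variable {Φ} in
theorem PosSemidef.ampliation [Fintype α] [DecidableEq α] [Fintype κ] [DecidableEq κ]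
    (hΦ : (choiMatrix Φ).PosSemidef) {M : Matrix (α × ι) (α × ι) 𝕜} (hM : M.PosSemidef) :
    (ampliation Φ M).PosSemidef := by
  rw [ampliation_eq_conjTranspose_mul_kronecker_mul]
  exact (hM.kronecker hΦ).conjTranspose_mul_mul_same _

end Matrix

theorem stmt_11 {d : ℕ}
    (Φ : Matrix (Fin d) (Fin d) ℂ →ₗ[ℂ] Matrix (Fin d) (Fin d) ℂ) :
    (∀ n : ℕ, ∀ M : Matrix (Fin n × Fin d) (Fin n × Fin d) ℂ, M.PosSemidef →
        (Matrix.of fun (p q : Fin n × Fin d) =>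
          Φ (Matrix.of fun i j => M (p.1, i) (q.1, j)) p.2 q.2).PosSemidef) ↔
      (∑ i : Fin d, ∑ j : Fin d,
        (Matrix.single i j (1 : ℂ)) ⊗ₖ Φ (Matrix.single i j (1 : ℂ))).PosSemidef := by
  rw [sum_single_kronecker_eq_choiMatrix]
  constructor
  · intro hCP
    rw [choiMatrix_eq_ampliation_vecMulVec]
    exact hCP d _ (posSemidef_vecMulVec_self_star _)
  · exact fun hΦ n M hM => hΦ.ampliation hM
end

section
/- For the map M(X) = tr(X)·1/d + α(X − Δ(X)) + β(Δ(X) − tr(X)·1/d), where Δ(X) = Σ_k E_{kk} X_{kk}, if M is a positive map then: α ≥ −1/(d−1), α ≤ 1, β ≥ −1/(d−1), and β ≤ 1. -/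
/-!
A rank-one diagonal projector `E_ii` is sent to a diagonal matrix whose entries are
`(1 + β (d - 1)) / d` and `(1 - β) / d`, which bounds `β`. The all-ones matrix `J` is sent to
`(1 - α) 1 + α J`, whose quadratic form is `2 (1 - α)` at `e_i - e_j` and
`d (1 + α (d - 1))` at the all-ones vector, which bounds `α`.
-/

open Matrix ComplexOrder

namespace Matrix

variable {n : Type*} [Fintype n] [DecidableEq n]

noncomputable def pinchingMap (α β : ℝ) (X : Matrix n n ℂ) : Matrix n n ℂ :=
  (X.trace / Fintype.card n) • 1 + (α : ℂ) • (X - diagonal fun k => X k k)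
    + (β : ℂ) • ((diagonal fun k => X k k) - (X.trace / Fintype.card n) • 1)

lemma pinchingMap_diagonal_single (α β : ℝ) (i : n) :
    pinchingMap α β (diagonal (Pi.single i 1)) = diagonal fun k =>
      (((if k = i then 1 + β * (Fintype.card n - 1) else 1 - β) / Fintype.card n : ℝ) : ℂ) := by
  ext k l
  by_cases hkl : k = l
  · subst hkl
    have : Nonempty n := ⟨k⟩
    have hcard : (Fintype.card n : ℂ) ≠ 0 := Nat.cast_ne_zero.2 Fintype.card_ne_zero
    by_cases hki : k = i
    · subst hki
      simp [pinchingMap, trace_diagonal]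
      field_simp
    · simp [pinchingMap, trace_diagonal, hki]
      ring
  · simp [pinchingMap, hkl]

lemma pinchingMap_vecMulVec_one [Nonempty n] (α β : ℝ) :
    pinchingMap α β (vecMulVec 1 1) =
      ((1 - α : ℝ) : ℂ) • 1 + (α : ℂ) • vecMulVec (1 : n → ℂ) 1 := by
  have hcard : (Fintype.card n : ℂ) ≠ 0 := Nat.cast_ne_zero.2 Fintype.card_ne_zero
  ext k l
  by_cases hkl : k = l
  · subst hkl
    simp [pinchingMap, trace, hcard]
  · simp [pinchingMap, hkl]

lemma PosSemidef.nonneg_of_smul_one_add_smul_vecMulVec_one [Nontrivial n] {a b : ℝ}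
    (h : ((a : ℂ) • 1 + (b : ℂ) • vecMulVec (1 : n → ℂ) 1).PosSemidef) :
    0 ≤ a ∧ 0 ≤ a + b * Fintype.card n := by
  obtain ⟨i, j, hij⟩ := exists_pair_ne n
  have h_diff := h.dotProduct_mulVec_nonneg (Pi.single i 1 - Pi.single j 1)
  have h_ones := h.dotProduct_mulVec_nonneg 1
  simp [dotProduct, mulVec, vecMulVec, one_apply, Pi.single_apply, Finset.sum_sub_distrib,
    mul_sub, sub_mul, hij, hij.symm] at h_diff
  simp [dotProduct, mulVec, vecMulVec, one_apply, Finset.sum_add_distrib] at h_ones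
  norm_cast at h_diff h_ones
  have hd : (0 : ℝ) < Fintype.card n := by exact_mod_cast Fintype.card_pos
  exact ⟨by linarith, nonneg_of_mul_nonneg_right (by linarith) hd⟩

variable [Nontrivial n] {α β : ℝ}

lemma pinchingMap_alpha_bounds
    (hpos : ∀ P : Matrix n n ℂ, P.PosSemidef → (pinchingMap α β P).PosSemidef) :
    -1 / ((Fintype.card n : ℝ) - 1) ≤ α ∧ α ≤ 1 := by
  have hJ : (vecMulVec (1 : n → ℂ) 1).PosSemidef := by
    simpa using posSemidef_vecMulVec_self_star (1 : n → ℂ)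
  have h := hpos _ hJ
  rw [pinchingMap_vecMulVec_one] at h
  obtain ⟨h_le, h_ge⟩ := h.nonneg_of_smul_one_add_smul_vecMulVec_one
  have hd : (1 : ℝ) < Fintype.card n := by exact_mod_cast Fintype.one_lt_card
  exact ⟨(div_le_iff₀ (by linarith)).2 (by linarith), by linarith⟩

lemma pinchingMap_beta_bounds
    (hpos : ∀ P : Matrix n n ℂ, P.PosSemidef → (pinchingMap α β P).PosSemidef) :
    -1 / ((Fintype.card n : ℝ) - 1) ≤ β ∧ β ≤ 1 := by
  obtain ⟨i, j, hij⟩ := exists_pair_ne n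
  have hE : (diagonal (Pi.single i (1 : ℂ))).PosSemidef := by
    rw [posSemidef_diagonal_iff]
    intro k
    by_cases hki : k = i <;> simp [hki]
  have h := hpos _ hE
  rw [pinchingMap_diagonal_single, posSemidef_diagonal_iff] at h
  have hd : (1 : ℝ) < Fintype.card n := by exact_mod_cast Fintype.one_lt_card
  have h_ii := (le_div_iff₀ (by linarith)).1 (Complex.zero_le_real.1 (h i))
  have h_ji := (le_div_iff₀ (by linarith)).1 (Complex.zero_le_real.1 (h j))
  simp only [if_true, if_neg (Ne.symm hij)] at h_ii h_ji
  exact ⟨(div_le_iff₀ (by linarith)).2 (by linarith), by linarith⟩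

end Matrix

theorem stmt_17 {d : ℕ} (hd : 2 ≤ d) (α β : ℝ)
    (M : Matrix (Fin d) (Fin d) ℂ → Matrix (Fin d) (Fin d) ℂ)
    (hM : ∀ X, M X = (X.trace / d) • (1 : Matrix (Fin d) (Fin d) ℂ)
        + (α : ℂ) • (X - Matrix.diagonal (fun k => X k k))
        + (β : ℂ) • (Matrix.diagonal (fun k => X k k)
            - (X.trace / d) • (1 : Matrix (Fin d) (Fin d) ℂ)))
    (hpos : ∀ P : Matrix (Fin d) (Fin d) ℂ, P.PosSemidef → (M P).PosSemidef) :
    -1 / ((d : ℝ) - 1) ≤ α ∧ α ≤ 1 ∧ -1 / ((d : ℝ) - 1) ≤ β ∧ β ≤ 1 := by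
  have : Nontrivial (Fin d) := Fin.nontrivial_iff_two_le.2 hd
  obtain rfl : M = pinchingMap α β := funext fun X => by simp [hM, pinchingMap]
  have hα := pinchingMap_alpha_bounds hpos
  have hβ := pinchingMap_beta_bounds hpos
  rw [Fintype.card_fin] at hα hβ
  exact ⟨hα.1, hα.2, hβ.1, hβ.2⟩
end
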